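/- arXiv:2604.13578 — 2 statements merged into one kernel-verified Lean document; each statement's English description precedes it below -/
import Mathlib

section
/- For every λ ∈ ℝ^n and all integers 0 ≤ l < k ≤ n, the polynomial identity ∑_{i=1}^n [ σ_{k−1}(λ|i) σ_l(λ) − σ_k(λ) σ_{l−1}(λ|i) ] λ_i² = (l+1) σ_k(λ) σ_{l+1}(λ) − (k+1) σ_{k+1}(λ) σ_l(λ) holds, with the conventions σ_{−1} = 0 and σ_{n+1} = 0. -/
/-- The `k`-th elementary symmetric function of `x` restricted to the index set `s`. -/
noncomputable def sigmaEOn {ι : Type*} [DecidableEq ι] (s : Finset ι) (k : ℕ) (x : ι → ℝ) : ℝ :=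
  ∑ t ∈ s.powersetCard k, ∏ i ∈ t, x i

/-- The `k`-th elementary symmetric function `σ_k(x)`. -/
noncomputable def sigmaE {ι : Type*} [Fintype ι] [DecidableEq ι] (k : ℕ) (x : ι → ℝ) : ℝ :=
  sigmaEOn Finset.univ k x

/-- The Gårding cone `Γ_k ⊆ ℝ^n`. -/
def gardingCone (n k : ℕ) : Set (Fin n → ℝ) :=
  {lam | ∀ j : ℕ, 1 ≤ j → j ≤ k → 0 < sigmaE j lam}

/-- Elementary symmetric function with integer index: `σ_j = 0` for `j < 0`. -/
noncomputable def sigmaEIntOn {ι : Type*} [DecidableEq ι] (s : Finset ι) (k : ℤ) (x : ι → ℝ) : ℝ :=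
  if 0 ≤ k then sigmaEOn s k.toNat x else 0

noncomputable def sigmaEInt {ι : Type*} [Fintype ι] [DecidableEq ι] (k : ℤ) (x : ι → ℝ) : ℝ :=
  sigmaEIntOn Finset.univ k x

/-!
Deleting the index `i` splits `σ_{m+1}(λ) = σ_{m+1}(λ|i) + λ_i σ_m(λ|i)`. Summing this over `i`
against the double count `∑_i σ_m(λ|i) = (n - m) σ_m(λ)` gives `∑_i λ_i σ_m(λ|i) = (m+1) σ_{m+1}`;
multiplying the split by `λ_i` and summing then gives
`∑_i σ_m(λ|i) λ_i² = σ_1 σ_{m+1} - (m+2) σ_{m+2}`. The identity is the difference of this formula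
for `m = k - 1` and `m = l - 1`, weighted by `σ_l` and `σ_k`; at `l = 0` both sides of the formula
vanish, matching `σ_{-1} = 0`.
-/

open Finset

theorem Multiset.esymm_cons_succ {R : Type*} [CommSemiring R] (a : R) (s : Multiset R) (m : ℕ) :
    (a ::ₘ s).esymm (m + 1) = s.esymm (m + 1) + a * s.esymm m := by
  simp [Multiset.esymm, Multiset.powersetCard_cons, Multiset.sum_map_mul_left]

section

variable {ι : Type*} [DecidableEq ι]

theorem sigmaEOn_eq_esymm (s : Finset ι) (m : ℕ) (x : ι → ℝ) :
    sigmaEOn s m x = (s.val.map x).esymm m :=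
  (esymm_map_val x s m).symm

theorem sigmaEOn_insert_succ {a : ι} {s : Finset ι} (ha : a ∉ s) (m : ℕ) (x : ι → ℝ) :
    sigmaEOn (insert a s) (m + 1) x = sigmaEOn s (m + 1) x + x a * sigmaEOn s m x := by
  rw [sigmaEOn_eq_esymm, insert_val_of_notMem ha, Multiset.map_cons, Multiset.esymm_cons_succ,
    sigmaEOn_eq_esymm, sigmaEOn_eq_esymm]

variable [Fintype ι]

theorem sigmaE_succ_eq_erase (i : ι) (m : ℕ) (x : ι → ℝ) :
    sigmaE (m + 1) x = sigmaEOn (univ.erase i) (m + 1) x + x i * sigmaEOn (univ.erase i) m x := by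
  simpa only [sigmaE, insert_erase (mem_univ i)] using sigmaEOn_insert_succ (notMem_erase i univ) m x

theorem sum_sigmaEOn_erase (m : ℕ) (x : ι → ℝ) :
    ∑ i, sigmaEOn (univ.erase i) m x = ((Fintype.card ι : ℝ) - m) * sigmaE m x := by
  have hsets (i : ι) :
      (univ.erase i).powersetCard m = (univ.powersetCard m).filter (fun t => i ∉ t) := by
    ext t
    simp [mem_powersetCard, subset_erase, and_comm]
  have hcount {t : Finset ι} (ht : t ∈ univ.powersetCard m) :
      ((univ.filter fun i => i ∉ t).card : ℝ) = Fintype.card ι - m := by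
    rw [mem_powersetCard] at ht
    rw [filter_notMem_eq_sdiff, card_univ_sdiff, ht.2, Nat.cast_sub (ht.2 ▸ card_le_univ t)]
  simp only [sigmaEOn, sigmaE, hsets, sum_filter]
  rw [sum_comm, mul_sum]
  refine sum_congr rfl fun t ht => ?_
  rw [← sum_filter, sum_const, nsmul_eq_mul, hcount ht]

theorem sum_mul_sigmaEOn_erase (m : ℕ) (x : ι → ℝ) :
    ∑ i, x i * sigmaEOn (univ.erase i) m x = ((m : ℝ) + 1) * sigmaE (m + 1) x := by
  have hsplit (i : ι) : x i * sigmaEOn (univ.erase i) m x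
      = sigmaE (m + 1) x - sigmaEOn (univ.erase i) (m + 1) x := by
    rw [sigmaE_succ_eq_erase i m]; ring
  simp only [hsplit, sum_sub_distrib, sum_const, card_univ, nsmul_eq_mul, sum_sigmaEOn_erase]
  push_cast
  ring

theorem sum_sigmaEOn_erase_mul_sq (m : ℕ) (x : ι → ℝ) :
    ∑ i, sigmaEOn (univ.erase i) m x * x i ^ 2
      = sigmaE 1 x * sigmaE (m + 1) x - ((m : ℝ) + 2) * sigmaE (m + 2) x := by
  have hsplit (i : ι) : sigmaEOn (univ.erase i) m x * x i ^ 2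
      = x i * sigmaE (m + 1) x - x i * sigmaEOn (univ.erase i) (m + 1) x := by
    rw [sigmaE_succ_eq_erase i m]; ring
  have hsigma_one : sigmaE 1 x = ∑ i, x i := by simp [sigmaE, sigmaEOn, powersetCard_one]
  simp only [hsplit, sum_sub_distrib, ← sum_mul, sum_mul_sigmaEOn_erase, hsigma_one]
  push_cast
  ring

theorem sum_sigmaEIntOn_erase_sub_one_mul_sq (l : ℕ) (x : ι → ℝ) :
    ∑ i, sigmaEIntOn (univ.erase i) ((l : ℤ) - 1) x * x i ^ 2
      = sigmaE 1 x * sigmaE l x - ((l : ℝ) + 1) * sigmaE (l + 1) x := by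
  cases l with
  | zero => simp [sigmaEIntOn, sigmaE, sigmaEOn]
  | succ m =>
    simp only [sigmaEIntOn, Nat.cast_succ, add_sub_cancel_right, Nat.cast_nonneg, if_true,
      Int.toNat_natCast, sum_sigmaEOn_erase_mul_sq]
    ring

end

theorem sigma_quotient_identity_general (n k l : ℕ) (hlk : l < k)
    (lam : Fin n → ℝ) :
    ∑ i : Fin n,
        (sigmaEOn (Finset.univ.erase i) (k - 1) lam * sigmaE l lam
          - sigmaE k lam * sigmaEIntOn (Finset.univ.erase i) ((l : ℤ) - 1) lam) * lam i ^ 2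
      = ((l : ℝ) + 1) * sigmaE k lam * sigmaE (l + 1) lam
        - ((k : ℝ) + 1) * sigmaE (k + 1) lam * sigmaE l lam := by
  obtain ⟨m, rfl⟩ : ∃ m, k = m + 1 := ⟨k - 1, by omega⟩
  simp only [sub_mul, sum_sub_distrib, mul_right_comm _ (sigmaE l lam), mul_assoc (sigmaE _ lam),
    ← mul_sum, ← sum_mul, Nat.add_sub_cancel, sum_sigmaEOn_erase_mul_sq,
    sum_sigmaEIntOn_erase_sub_one_mul_sq]
  push_cast
  ring

/-- the polynomial identity
`∑_i [σ_{k−1}(λ|i) σ_l(λ) − σ_k(λ) σ_{l−1}(λ|i)] λ_i² =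
  (l+1) σ_k(λ) σ_{l+1}(λ) − (k+1) σ_{k+1}(λ) σ_l(λ)`. -/
theorem sigma_quotient_identity (n k l : ℕ) (hlk : l < k) (hkn : k ≤ n)
    (lam : Fin n → ℝ) :
    ∑ i : Fin n,
        (sigmaEOn (Finset.univ.erase i) (k - 1) lam * sigmaE l lam
          - sigmaE k lam * sigmaEIntOn (Finset.univ.erase i) ((l : ℤ) - 1) lam) * lam i ^ 2
      = ((l : ℝ) + 1) * sigmaE k lam * sigmaE (l + 1) lam
        - ((k : ℝ) + 1) * sigmaE (k + 1) lam * sigmaE l lam :=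
  sigma_quotient_identity_general n k l hlk lam
end

section
/- Let 0 ≤ l < k ≤ n be integers and let λ ∈ Γ_k. Then (n−k+1) σ_{k−1}(λ) σ_l(λ) − (n−l+1) σ_{l−1}(λ) σ_k(λ) ≥ (k−l) · (C(n,k)/C(n,l))^{1/(k−l)} · σ_l(λ)^{(k−l+1)/(k−l)} · σ_k(λ)^{(k−l−1)/(k−l)}, with the convention σ_{−1} = 0 when l = 0. -/
/-!
Write `E_j = σ_j / C(n,j)`. Newton's inequalities `E_{i} E_{i+2} ≤ E_{i+1}²` hold for any real
numbers: differentiating `∏ (X - λ_i)` keeps all roots real (Rolle) and leaves the `E_j`,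
`j < n`, unchanged, which reduces to `n = i + 2`; there, passing to the reciprocals of the roots
turns the inequality into `E_2 ≤ E_1²`, i.e. Cauchy–Schwarz.

On `Γ_k` the `E_j`, `j ≤ k`, are positive, so log-concavity says that `E_{j-1} / E_j` increases
with `j ≤ k`. With `ρ = E_{k-1} / E_k` this gives `E_l / E_k ≤ ρ^(k-l)` and `E_{l-1} / E_l ≤ ρ`,
hence `k ρ - l E_{l-1} / E_l ≥ (k - l) ρ ≥ (k - l) (E_l / E_k)^(1/(k-l))`. Multiplying by
`σ_l σ_k` and using `(n - j + 1) C(n, j-1) = j C(n, j)` gives the theorem.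
-/

open Polynomial

namespace Multiset

section CommSemiring

variable {R : Type*} [CommSemiring R] (s : Multiset R)

theorem esymm_zero : s.esymm 0 = 1 := by
  simp [esymm, powersetCard_zero_left]

theorem esymm_one : s.esymm 1 = s.sum := by
  simp [esymm, powersetCard_one]

theorem esymm_cons_succ_s15 (a : R) (j : ℕ) :
    (a ::ₘ s).esymm (j + 1) = s.esymm (j + 1) + a * s.esymm j := by
  simp only [esymm, powersetCard_cons, map_add, sum_add, map_map, Function.comp_def, prod_cons,
    ← sum_map_mul_left]

theorem esymm_eq_zero_of_card_lt {j : ℕ} (h : card s < j) : s.esymm j = 0 := by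
  simp [esymm, powersetCard_eq_empty j h]

theorem esymm_card : s.esymm (card s) = s.prod := by
  induction s using Multiset.induction with
  | empty => simp [esymm_zero]
  | cons a s ih =>
    rw [card_cons, esymm_cons_succ_s15, esymm_eq_zero_of_card_lt s (Nat.lt_succ_self _), ih,
      prod_cons, zero_add]

end CommSemiring

theorem sq_esymm_one {R : Type*} [CommRing R] (s : Multiset R) :
    s.esymm 1 ^ 2 = 2 * s.esymm 2 + (s.map (· ^ 2)).sum := by
  induction s using Multiset.induction with
  | empty => simp [esymm_one, esymm_eq_zero_of_card_lt 0 (by simp : card 0 < 2)]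
  | cons a s ih =>
    rw [esymm_one] at ih ⊢
    rw [esymm_cons_succ_s15, esymm_one, sum_cons, map_cons, sum_cons]
    linear_combination ih

theorem sq_sum_le_card_mul_sum_sq (s : Multiset ℝ) :
    s.sum ^ 2 ≤ card s * (s.map (· ^ 2)).sum := by
  induction s using Multiset.induction with
  | empty => simp
  | cons a s ih =>
    rcases eq_or_ne s 0 with rfl | hs
    · simp
    have hcard : (1 : ℝ) ≤ card s := by exact_mod_cast card_pos.mpr hs
    have hsq : 0 ≤ (s.map (· ^ 2)).sum := sum_nonneg fun x hx => by
      obtain ⟨y, -, rfl⟩ := mem_map.mp hx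
      positivity
    rw [sum_cons, map_cons, sum_cons, card_cons]
    push_cast
    nlinarith [sq_nonneg (card s * a - s.sum)]

theorem esymm_map_inv_mul_prod {K : Type*} [Field K] (s : Multiset K) (hs : ∀ x ∈ s, x ≠ 0)
    {j : ℕ} (hj : j ≤ card s) : (s.map (·⁻¹)).esymm j * s.prod = s.esymm (card s - j) := by
  induction s using Multiset.induction generalizing j with
  | empty =>
    obtain rfl : j = 0 := by simpa using hj
    simp [esymm_zero]
  | cons a s ih =>
    have ha : a ≠ 0 := hs a (mem_cons_self a s)
    replace ih := @ih fun x hx => hs x (mem_cons_of_mem hx)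
    rcases j with _ | j
    · rw [esymm_zero, one_mul, Nat.sub_zero, esymm_card]
    rw [card_cons] at hj ⊢
    rw [map_cons, esymm_cons_succ_s15, prod_cons]
    obtain hj | rfl := (Nat.le_of_succ_le_succ hj).lt_or_eq
    · rw [show card s + 1 - (j + 1) = card s - (j + 1) + 1 by omega, esymm_cons_succ_s15,
        ← ih hj, show card s - (j + 1) + 1 = card s - j by omega, ← ih hj.le]
      linear_combination ((s.map (·⁻¹)).esymm j * s.prod) * inv_mul_cancel₀ ha
    · rw [esymm_eq_zero_of_card_lt _ (by simp), Nat.sub_self, esymm_zero]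
      have := ih le_rfl
      rw [Nat.sub_self, esymm_zero] at this
      linear_combination (a⁻¹ * a) * this + inv_mul_cancel₀ ha

noncomputable def esymmMean (s : Multiset ℝ) (j : ℕ) : ℝ :=
  s.esymm j / (card s).choose j

variable (s : Multiset ℝ)

theorem esymmMean_zero : s.esymmMean 0 = 1 := by
  simp [esymmMean, esymm_zero]

theorem choose_mul_esymmMean (j : ℕ) : ((card s).choose j : ℝ) * s.esymmMean j = s.esymm j := by
  rcases le_or_gt j (card s) with h | h
  · exact mul_div_cancel₀ _ (by exact_mod_cast (Nat.choose_pos h).ne')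
  · simp [esymmMean, Nat.choose_eq_zero_of_lt h, esymm_eq_zero_of_card_lt s h]

theorem esymmMean_card : s.esymmMean (card s) = s.prod := by
  rw [esymmMean, esymm_card, Nat.choose_self, Nat.cast_one, div_one]

theorem esymmMean_card_sub_eq {j : ℕ} (hs : ∀ x ∈ s, x ≠ 0) (hj : j ≤ card s) :
    s.esymmMean (card s - j) = (s.map (·⁻¹)).esymmMean j * s.prod := by
  rw [esymmMean, esymmMean, card_map, Nat.choose_symm hj, ← esymm_map_inv_mul_prod s hs hj,
    div_mul_eq_mul_div]

theorem esymmMean_two_le_sq_esymmMean_one : s.esymmMean 2 ≤ s.esymmMean 1 ^ 2 := by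
  have hsq := sq_esymm_one s
  have hcs := sq_sum_le_card_mul_sum_sq s
  rw [← esymm_one] at hcs
  rcases lt_or_ge (card s) 2 with hm | hm
  · rw [esymmMean, esymm_eq_zero_of_card_lt s hm, zero_div]
    positivity
  have hm' : (2 : ℝ) ≤ card s := by exact_mod_cast hm
  have hpos : (0 : ℝ) < card s * (card s - 1) / 2 := by
    have : (0 : ℝ) < card s - 1 := by linarith
    positivity
  rw [esymmMean, esymmMean, Nat.cast_choose_two, Nat.choose_one_right, div_pow,
    div_le_div_iff₀ hpos (by positivity)]
  nlinarith

theorem exists_card_pred_esymm_eq (hs : s ≠ 0) :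
    ∃ t : Multiset ℝ, card t = card s - 1 ∧
      ∀ j ≤ card t, ((card s : ℝ) - j) * s.esymm j = card s * t.esymm j := by
  set m := card s
  have hm : 1 ≤ m := card_pos.mpr hs
  set p : ℝ[X] := (s.map fun a => X - C a).prod
  have hp_deg : p.natDegree = m := natDegree_multiset_prod_X_sub_C_eq_card s
  have hp_monic : p.Monic := monic_multiset_prod_of_monic _ _ fun a _ => monic_X_sub_C a
  have hq_deg : (derivative p).natDegree = m - 1 := by simp [hp_deg]
  have hq_lead : (derivative p).leadingCoeff = m := by simp [hp_monic.leadingCoeff, hp_deg]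
  -- Rolle: the derivative of a polynomial with only real roots has only real roots
  have hq_roots : card (derivative p).roots = (derivative p).natDegree := by
    refine le_antisymm (card_roots' _) ?_
    have := card_roots_le_derivative p
    rw [roots_multiset_prod_X_sub_C] at this
    omega
  refine ⟨(derivative p).roots, hq_roots.trans hq_deg, fun j hj => ?_⟩
  rw [hq_roots, hq_deg] at hj
  have hq_coeff := coeff_eq_esymm_roots_of_card hq_roots (k := m - 1 - j) (by omega)
  have hcast : ((m - 1 - j : ℕ) : ℝ) + 1 = m - j := by
    rw [Nat.cast_sub (show j ≤ m - 1 by omega), Nat.cast_sub hm]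
    ring
  rw [coeff_derivative, prod_X_sub_C_coeff s (k := m - 1 - j + 1) (by omega), hq_lead, hq_deg,
    show m - (m - 1 - j + 1) = j by omega, show m - 1 - (m - 1 - j) = j by omega,
    hcast] at hq_coeff
  have hsign : ((-1 : ℝ) ^ j) ≠ 0 := pow_ne_zero _ (by norm_num)
  apply mul_left_cancel₀ hsign
  linear_combination hq_coeff

theorem exists_card_pred_esymmMean_eq (hs : s ≠ 0) :
    ∃ t : Multiset ℝ, card t = card s - 1 ∧ ∀ j ≤ card t, t.esymmMean j = s.esymmMean j := by
  obtain ⟨t, ht, hst⟩ := exists_card_pred_esymm_eq s hs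
  refine ⟨t, ht, fun j hj => ?_⟩
  have hm : 1 ≤ card s := card_pos.mpr hs
  have hchoose : ((card s - 1).choose j : ℝ) * card s = (card s).choose j * (card s - j) := by
    have := Nat.choose_mul_succ_eq (card s - 1) j
    rw [Nat.sub_add_cancel hm] at this
    rw [← Nat.cast_sub (show j ≤ card s by omega)]
    exact_mod_cast this
  have hc₁ : ((card s).choose j : ℝ) ≠ 0 := by exact_mod_cast (Nat.choose_pos (by omega)).ne'
  have hc₂ : ((card s - 1).choose j : ℝ) ≠ 0 := by exact_mod_cast (Nat.choose_pos (by omega)).ne'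
  have hm' : (card s : ℝ) ≠ 0 := by exact_mod_cast (show 0 < card s by omega).ne'
  rw [esymmMean, esymmMean, ht, div_eq_div_iff hc₂ hc₁]
  apply mul_left_cancel₀ hm'
  linear_combination -((card s).choose j : ℝ) * hst j hj - s.esymm j * hchoose

theorem esymmMean_mul_esymmMean_le_sq_of_card_eq {i : ℕ} (hi : card s = i + 2) :
    s.esymmMean i * s.esymmMean (i + 2) ≤ s.esymmMean (i + 1) ^ 2 := by
  have e₀ : s.esymmMean (i + 2) = s.prod := by rw [← hi, esymmMean_card]
  rcases eq_or_ne s.prod 0 with h0 | h0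
  · rw [e₀, h0, mul_zero]
    positivity
  have hs : ∀ x ∈ s, x ≠ 0 := fun x hx hx0 => h0 (prod_eq_zero (hx0 ▸ hx))
  set y := s.map (·⁻¹)
  have e₂ : s.esymmMean i = y.esymmMean 2 * s.prod := by
    rw [show i = card s - 2 by omega]; exact esymmMean_card_sub_eq s hs (by omega)
  have e₁ : s.esymmMean (i + 1) = y.esymmMean 1 * s.prod := by
    rw [show i + 1 = card s - 1 by omega]; exact esymmMean_card_sub_eq s hs (by omega)
  rw [e₂, e₁, e₀]
  nlinarith [mul_le_mul_of_nonneg_right (esymmMean_two_le_sq_esymmMean_one y) (sq_nonneg s.prod)]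

theorem esymmMean_mul_esymmMean_le_sq {i : ℕ} (hi : i + 2 ≤ card s) :
    s.esymmMean i * s.esymmMean (i + 2) ≤ s.esymmMean (i + 1) ^ 2 := by
  obtain ⟨d, hd⟩ := Nat.exists_eq_add_of_le hi
  induction d generalizing s with
  | zero => exact esymmMean_mul_esymmMean_le_sq_of_card_eq s hd
  | succ d ih =>
    obtain ⟨t, ht, hst⟩ := exists_card_pred_esymmMean_eq s (by rintro rfl; simp at hd)
    rw [← hst i (by omega), ← hst (i + 1) (by omega), ← hst (i + 2) (by omega)]
    exact ih t (by omega) (by omega)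

end Multiset

section LogConcave

variable {a : ℕ → ℝ} {k : ℕ}

theorem div_succ_le_div_succ_of_logConcave (hpos : ∀ j ≤ k, 0 < a j)
    (hlc : ∀ i, i + 2 ≤ k → a i * a (i + 2) ≤ a (i + 1) ^ 2) {i j : ℕ} (hij : i ≤ j)
    (hj : j < k) : a i / a (i + 1) ≤ a j / a (j + 1) := by
  induction j, hij using Nat.le_induction with
  | base => rfl
  | succ j hij ih =>
    refine (ih (by omega)).trans ?_
    rw [div_le_div_iff₀ (hpos _ (by omega)) (hpos _ (by omega)), ← sq]
    exact hlc j (by omega)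

theorem div_le_div_pow_of_logConcave (hpos : ∀ j ≤ k, 0 < a j)
    (hlc : ∀ i, i + 2 ≤ k → a i * a (i + 2) ≤ a (i + 1) ^ 2) {l : ℕ} (hlk : l ≤ k) :
    a l / a k ≤ (a (k - 1) / a k) ^ (k - l) := by
  suffices h : ∀ d ≤ k, a (k - d) / a k ≤ (a (k - 1) / a k) ^ d by
    simpa [Nat.sub_sub_self hlk] using h (k - l) (by omega)
  intro d hd
  induction d with
  | zero => simp [div_self (hpos k le_rfl).ne']
  | succ d ih =>
    have hstep := div_succ_le_div_succ_of_logConcave hpos hlc (i := k - (d + 1)) (j := k - 1)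
      (by omega) (by omega)
    rw [show k - (d + 1) + 1 = k - d by omega, show k - 1 + 1 = k by omega] at hstep
    have hρ : 0 ≤ a (k - 1) / a k := (div_pos (hpos _ (by omega)) (hpos k le_rfl)).le
    calc a (k - (d + 1)) / a k = a (k - (d + 1)) / a (k - d) * (a (k - d) / a k) :=
          (div_mul_div_cancel₀ (hpos _ (by omega)).ne').symm
      _ ≤ a (k - 1) / a k * (a (k - 1) / a k) ^ d :=
          mul_le_mul hstep (ih (by omega)) (div_pos (hpos _ (by omega)) (hpos k le_rfl)).le hρ
      _ = (a (k - 1) / a k) ^ (d + 1) := (pow_succ' _ _).symm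

theorem mul_mul_rpow_le_of_logConcave (hpos : ∀ j ≤ k, 0 < a j)
    (hlc : ∀ i, i + 2 ≤ k → a i * a (i + 2) ≤ a (i + 1) ^ 2) {l : ℕ} (hlk : l < k) :
    ((k : ℝ) - l) * (a l * a k * (a l / a k) ^ (1 / ((k : ℝ) - l)))
      ≤ k * a (k - 1) * a l - l * a (l - 1) * a k := by
  have hk := hpos k le_rfl
  have hl := hpos l hlk.le
  have hk₁ := hpos (k - 1) (by omega)
  set ρ := a (k - 1) / a k
  have hd : (0 : ℝ) < k - l := sub_pos.mpr (Nat.cast_lt.mpr hlk)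
  have hroot : (a l / a k) ^ (1 / ((k : ℝ) - l)) ≤ ρ :=
    calc (a l / a k) ^ (1 / ((k : ℝ) - l)) ≤ (ρ ^ (k - l)) ^ (1 / ((k : ℝ) - l)) := by
          gcongr
          exact div_le_div_pow_of_logConcave hpos hlc hlk.le
      _ = ρ := by
          rw [← Nat.cast_sub hlk.le, one_div, Real.pow_rpow_inv_natCast (by positivity) (by omega)]
  have hlow : l * a (l - 1) * a k ≤ l * a (k - 1) * a l := by
    rcases Nat.eq_zero_or_pos l with rfl | hl₀
    · simp
    have := div_succ_le_div_succ_of_logConcave hpos hlc (i := l - 1) (j := k - 1) (by omega)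
      (by omega)
    rw [Nat.sub_add_cancel hl₀, Nat.sub_add_cancel (by omega), div_le_div_iff₀ hl hk] at this
    nlinarith
  calc ((k : ℝ) - l) * (a l * a k * (a l / a k) ^ (1 / ((k : ℝ) - l)))
      ≤ ((k : ℝ) - l) * (a l * a k * ρ) := by gcongr
    _ = ((k : ℝ) - l) * a (k - 1) * a l := by
        simp only [ρ]
        field_simp
    _ ≤ k * a (k - 1) * a l - l * a (l - 1) * a k := by linarith

end LogConcave

theorem div_rpow_mul_rpow_mul_rpow {A B x y d : ℝ} (hA : 0 < A) (hB : 0 < B) (hx : 0 < x)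
    (hy : 0 < y) (hd : d ≠ 0) :
    (A / B) ^ (1 / d) * (B * x) ^ ((d + 1) / d) * (A * y) ^ ((d - 1) / d)
      = A * B * (x * y * (x / y) ^ (1 / d)) := by
  rw [add_div, sub_div, div_self hd, Real.rpow_add (by positivity), Real.rpow_sub (by positivity),
    Real.rpow_one, Real.rpow_one, Real.div_rpow hA.le hB.le, Real.div_rpow hx.le hy.le,
    Real.mul_rpow hB.le hx.le, Real.mul_rpow hA.le hy.le]
  have : 0 < A ^ (1 / d) := by positivity
  have : 0 < B ^ (1 / d) := by positivity
  have : 0 < y ^ (1 / d) := by positivity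
  field_simp

theorem sub_add_one_mul_choose_sub_one {n j : ℕ} (hj : 1 ≤ j) (hjn : j ≤ n) :
    ((n : ℝ) - j + 1) * n.choose (j - 1) = j * n.choose j := by
  have := Nat.choose_succ_right_eq n (j - 1)
  rw [Nat.sub_add_cancel hj, show n - (j - 1) = n - j + 1 by omega] at this
  rw [show (n : ℝ) - j + 1 = ((n - j + 1 : ℕ) : ℝ) by push_cast [Nat.cast_sub hjn]; ring]
  norm_cast
  rw [mul_comm, ← this, mul_comm]

theorem sigmaEInt_natCast_sub_one {ι : Type*} [Fintype ι] [DecidableEq ι] {l : ℕ} (hl : 1 ≤ l)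
    (x : ι → ℝ) : sigmaEInt ((l : ℤ) - 1) x = sigmaE (l - 1) x := by
  rw [sigmaEInt, sigmaEIntOn, if_pos (by omega), show ((l : ℤ) - 1).toNat = l - 1 by omega]
  rfl

/-- for `λ ∈ Γ_k`,
`(n−k+1) σ_{k−1} σ_l − (n−l+1) σ_{l−1} σ_k ≥ (k−l)(C(n,k)/C(n,l))^{1/(k−l)} σ_l^{(k−l+1)/(k−l)} σ_k^{(k−l−1)/(k−l)}`. -/
theorem sum_partials_sigma_lower_bound (n k l : ℕ) (hlk : l < k) (hkn : k ≤ n)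
    (lam : Fin n → ℝ) (hlam : lam ∈ gardingCone n k) :
    ((k : ℝ) - (l : ℝ)) * ((n.choose k : ℝ) / (n.choose l : ℝ)) ^ (1 / ((k : ℝ) - (l : ℝ)))
        * sigmaE l lam ^ (((k : ℝ) - (l : ℝ) + 1) / ((k : ℝ) - (l : ℝ)))
        * sigmaE k lam ^ (((k : ℝ) - (l : ℝ) - 1) / ((k : ℝ) - (l : ℝ)))
      ≤ ((n : ℝ) - (k : ℝ) + 1) * sigmaE (k - 1) lam * sigmaE l lam
        - ((n : ℝ) - (l : ℝ) + 1) * sigmaEInt ((l : ℤ) - 1) lam * sigmaE k lam := by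
  set s := Finset.univ.val.map lam
  set E := s.esymmMean
  have hcard : Multiset.card s = n := by simp [s]
  have hσ (j : ℕ) : sigmaE j lam = n.choose j * E j := by
    rw [sigmaE, sigmaEOn, ← Finset.esymm_map_val, ← s.choose_mul_esymmMean, hcard]
  have hchoose {j : ℕ} (hj : j ≤ n) : (0 : ℝ) < n.choose j := by exact_mod_cast Nat.choose_pos hj
  have hpos : ∀ j ≤ k, 0 < E j := by
    rintro (_ | j) hj
    · simp [E, Multiset.esymmMean_zero]
    · exact pos_of_mul_pos_right ((hσ _).symm ▸ hlam (j + 1) (by omega) hj) (hchoose (by omega)).le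
  have hlc (i : ℕ) (hi : i + 2 ≤ k) : E i * E (i + 2) ≤ E (i + 1) ^ 2 :=
    s.esymmMean_mul_esymmMean_le_sq (by omega)
  have hk : ((n : ℝ) - k + 1) * sigmaE (k - 1) lam = k * n.choose k * E (k - 1) := by
    rw [hσ, ← mul_assoc, sub_add_one_mul_choose_sub_one (by omega) hkn]
  have hl : ((n : ℝ) - l + 1) * sigmaEInt ((l : ℤ) - 1) lam = l * n.choose l * E (l - 1) := by
    rcases Nat.eq_zero_or_pos l with rfl | hl₀
    · simp [sigmaEInt, sigmaEIntOn]
    · rw [sigmaEInt_natCast_sub_one hl₀, hσ, ← mul_assoc,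
        sub_add_one_mul_choose_sub_one hl₀ (by omega)]
  rw [hk, hl, hσ l, hσ k, mul_assoc ((k : ℝ) - l), mul_assoc ((k : ℝ) - l),
    div_rpow_mul_rpow_mul_rpow (hchoose hkn) (hchoose (by omega)) (hpos l hlk.le) (hpos k le_rfl)
      (sub_pos.mpr (Nat.cast_lt.mpr hlk)).ne']
  have key := mul_le_mul_of_nonneg_left (mul_mul_rpow_le_of_logConcave hpos hlc hlk)
    (mul_pos (hchoose hkn) (hchoose (by omega : l ≤ n))).le
  linarith
end
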